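/- If G is a connected graph of order n and diameter D, and H is obtained from G by deleting a single edge uv such that H remains connected, then μ(G) − μ(H) > 2/(μ(G)^{2D} · n). -/

import Mathlib

open Classical in
noncomputable def adjMat {V : Type*} [Fintype V] (G : SimpleGraph V) :
    Matrix V V ℝ :=
  Matrix.of fun i j => if G.Adj i j then 1 else 0

def IsAdjEigenvalue {V : Type*} [Fintype V] (A : Matrix V V ℝ) (μ : ℝ) : Prop :=
  ∃ x : V → ℝ, x ≠ 0 ∧ A.mulVec x = μ • x

def IsMaxAdjEigenvalue {V : Type*} [Fintype V] (A : Matrix V V ℝ) (μ : ℝ) : Prop :=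
  IsAdjEigenvalue A μ ∧ ∀ ν, IsAdjEigenvalue A ν → ν ≤ μ

def IsMinAdjEigenvalue {V : Type*} [Fintype V] (A : Matrix V V ℝ) (μ : ℝ) : Prop :=
  IsAdjEigenvalue A μ ∧ ∀ ν, IsAdjEigenvalue A ν → μ ≤ ν

/-!
Let `H = G - uv` and let `y ≥ 0` be a Perron vector of `H`. The Rayleigh quotient of `G` at `y`
exceeds `μ(H)` by `2 y_u y_v / ‖y‖²`, so `μ(G) - μ(H) ≥ 2 y_u y_v / ‖y‖²`. Along an edge `ab` of
`H` we have `y_b ≤ (A_H y)_a = μ(H) y_a`, so if `w` is a vertex where `y` is maximal,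
`y_w² ≤ μ(H)^(d_H(w,u) + d_H(w,v)) y_u y_v`. The combinatorial input is
`d_H(w,u) + d_H(w,v) ≤ 2D`; together with `‖y‖² ≤ n y_w²` and `μ(H) < μ(G)` this gives the bound.
-/

open Matrix
open scoped MatrixOrder

namespace SimpleGraph

variable {V : Type*} {G : SimpleGraph V} {u v : V}

lemma Connected.dist_le_of_walk_deleteEdges (hH : (G.deleteEdges {s(u, v)}).Connected)
    {a b : V} (p : G.Walk a b) :
    (G.deleteEdges {s(u, v)}).dist a b ≤ p.length ∨
      (G.deleteEdges {s(u, v)}).dist a u + 1 + (G.deleteEdges {s(u, v)}).dist v b ≤ p.length ∨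
      (G.deleteEdges {s(u, v)}).dist a v + 1 + (G.deleteEdges {s(u, v)}).dist u b ≤ p.length := by
  set H := G.deleteEdges {s(u, v)}
  induction p with
  | nil => simp
  | @cons a c b hac p ih =>
    rw [Walk.length_cons]
    by_cases hs : s(a, c) = s(u, v)
    · rcases Sym2.eq_iff.mp hs with ⟨rfl, rfl⟩ | ⟨rfl, rfl⟩ <;>
        simp only [dist_self] at ih ⊢ <;> omega
    · have hac' : H.dist a c = 1 := dist_eq_one_iff_adj.mpr ((deleteEdges_adj ..).mpr ⟨hac, hs⟩)
      have := hH.dist_triangle (u := a) (v := c) (w := b)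
      have := hH.dist_triangle (u := a) (v := c) (w := u)
      have := hH.dist_triangle (u := a) (v := c) (w := v)
      omega

/-- The geodesic of `G - uv` from `w` to `v` passes at distance `D + 1` from `w` through a
vertex `x`; a geodesic of `G` from `w` to `x` is shorter, so it must use the edge `uv`. -/
lemma Connected.dist_add_dist_deleteEdges_le_of_lt {D : ℕ} (hD : ∀ a b, G.dist a b ≤ D)
    (hH : (G.deleteEdges {s(u, v)}).Connected) {w : V}
    (hwv : D < (G.deleteEdges {s(u, v)}).dist w v) :
    (G.deleteEdges {s(u, v)}).dist w u + (G.deleteEdges {s(u, v)}).dist w v ≤ 2 * D := by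
  set H := G.deleteEdges {s(u, v)} with hHdef
  obtain ⟨p, hp⟩ := (hH.preconnected w v).exists_walk_length_eq_dist
  set x := p.getVert (D + 1)
  have hwx : H.dist w x ≤ D + 1 := (dist_le (p.take (D + 1))).trans (by simp [Walk.take_length])
  have hxv : H.dist x v ≤ p.length - (D + 1) :=
    (dist_le (p.drop (D + 1))).trans_eq (Walk.drop_length _ _)
  have hvx : H.dist v x = H.dist x v := dist_comm
  have := hH.dist_triangle (u := w) (v := x) (w := v)
  obtain ⟨q, hq⟩ := ((hH.mono (deleteEdges_le _)).preconnected w x).exists_walk_length_eq_dist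
  have hqD : q.length ≤ D := hq ▸ hD w x
  rcases hH.dist_le_of_walk_deleteEdges q with h | h | h <;> rw [← hHdef] at h <;> omega

lemma Connected.dist_add_dist_deleteEdges_le {D : ℕ} (hD : ∀ a b, G.dist a b ≤ D)
    (hH : (G.deleteEdges {s(u, v)}).Connected) (w : V) :
    (G.deleteEdges {s(u, v)}).dist w u + (G.deleteEdges {s(u, v)}).dist w v ≤ 2 * D := by
  by_cases hwv : D < (G.deleteEdges {s(u, v)}).dist w v
  · exact hH.dist_add_dist_deleteEdges_le_of_lt hD hwv
  by_cases hwu : D < (G.deleteEdges {s(u, v)}).dist w u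
  · rw [Sym2.eq_swap] at hH hwu ⊢
    have := hH.dist_add_dist_deleteEdges_le_of_lt hD hwu
    omega
  omega

end SimpleGraph

variable {V : Type*} [Fintype V]

lemma Matrix.dotProduct_mulVec_le_abs {A : Matrix V V ℝ} (hA : ∀ i j, 0 ≤ A i j) (x : V → ℝ) :
    x ⬝ᵥ A *ᵥ x ≤ |x| ⬝ᵥ A *ᵥ |x| := by
  simp only [dotProduct, mulVec, Finset.mul_sum, Pi.abs_apply]
  refine Finset.sum_le_sum fun i _ => Finset.sum_le_sum fun j _ => ?_
  calc x i * (A i j * x j) ≤ |x i * (A i j * x j)| := le_abs_self _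
    _ = |x i| * (A i j * |x j|) := by rw [abs_mul, abs_mul, abs_of_nonneg (hA i j)]

lemma dotProduct_self_le_card_mul_sq {y : V → ℝ} (hy : 0 ≤ y) {c : ℝ} (hc : ∀ i, y i ≤ c) :
    y ⬝ᵥ y ≤ Fintype.card V * c ^ 2 := by
  calc y ⬝ᵥ y = ∑ i, y i * y i := rfl
    _ ≤ ∑ _i : V, c * c :=
      Finset.sum_le_sum fun i _ => mul_le_mul (hc i) (hc i) (hy i) ((hy i).trans (hc i))
    _ = Fintype.card V * c ^ 2 := by simp [sq]

lemma isAdjEigenvalue_of_mem_spectrum [DecidableEq V] {A : Matrix V V ℝ} {ν : ℝ}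
    (h : ν ∈ spectrum ℝ A) : IsAdjEigenvalue A ν := by
  rw [← Matrix.spectrum_toLin', ← Module.End.hasEigenvalue_iff_mem_spectrum] at h
  obtain ⟨x, hx⟩ := h.exists_hasEigenvector
  exact ⟨x, hx.2, by simpa using hx.apply_eq_smul⟩

lemma dotProduct_smul_one_sub_mulVec [DecidableEq V] (A : Matrix V V ℝ) (μ : ℝ) (x : V → ℝ) :
    x ⬝ᵥ (μ • (1 : Matrix V V ℝ) - A) *ᵥ x = μ * (x ⬝ᵥ x) - x ⬝ᵥ A *ᵥ x := by
  simp [sub_mulVec, smul_mulVec, dotProduct_sub]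

namespace IsMaxAdjEigenvalue

variable {A : Matrix V V ℝ} {μ : ℝ}

lemma posSemidef_smul_one_sub [DecidableEq V] (hA : A.IsHermitian)
    (h : IsMaxAdjEigenvalue A μ) : (μ • (1 : Matrix V V ℝ) - A).PosSemidef := by
  have : A ≤ algebraMap ℝ (Matrix V V ℝ) μ :=
    le_algebraMap_of_spectrum_le (fun ν hν => h.2 ν (isAdjEigenvalue_of_mem_spectrum hν)) hA
  rwa [Algebra.algebraMap_eq_smul_one] at this

lemma dotProduct_mulVec_le (hA : A.IsHermitian) (h : IsMaxAdjEigenvalue A μ) (x : V → ℝ) :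
    x ⬝ᵥ A *ᵥ x ≤ μ * (x ⬝ᵥ x) := by
  classical
  have := (h.posSemidef_smul_one_sub hA).dotProduct_mulVec_nonneg x
  rw [star_trivial, dotProduct_smul_one_sub_mulVec] at this
  linarith

lemma mulVec_eq_smul_of_dotProduct_mulVec_eq (hA : A.IsHermitian) (h : IsMaxAdjEigenvalue A μ)
    {x : V → ℝ} (hx : x ⬝ᵥ A *ᵥ x = μ * (x ⬝ᵥ x)) : A *ᵥ x = μ • x := by
  classical
  have := ((h.posSemidef_smul_one_sub hA).dotProduct_mulVec_zero_iff x).mp (by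
    rw [star_trivial, dotProduct_smul_one_sub_mulVec, hx, sub_self])
  rw [sub_mulVec, smul_mulVec, one_mulVec, sub_eq_zero] at this
  exact this.symm

/-- For a nonnegative matrix, `|z|` is an eigenvector for the top eigenvalue whenever `z` is:
its Rayleigh quotient can only be larger. -/
lemma exists_nonneg_eigenvector (hA : A.IsHermitian) (hA0 : ∀ i j, 0 ≤ A i j)
    (h : IsMaxAdjEigenvalue A μ) : ∃ y : V → ℝ, y ≠ 0 ∧ 0 ≤ y ∧ A *ᵥ y = μ • y := by
  obtain ⟨z, hz0, hz⟩ := h.1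
  have habs : |z| ⬝ᵥ |z| = z ⬝ᵥ z := by simp [dotProduct, abs_mul_abs_self]
  refine ⟨|z|, by simpa using hz0, abs_nonneg z,
    h.mulVec_eq_smul_of_dotProduct_mulVec_eq hA (le_antisymm (h.dotProduct_mulVec_le hA _) ?_)⟩
  calc μ * (|z| ⬝ᵥ |z|) = z ⬝ᵥ A *ᵥ z := by rw [hz, dotProduct_smul, smul_eq_mul, habs]
    _ ≤ |z| ⬝ᵥ A *ᵥ |z| := dotProduct_mulVec_le_abs hA0 z

end IsMaxAdjEigenvalue

section adjMat

variable (G : SimpleGraph V)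

lemma adjMat_isHermitian : (adjMat G).IsHermitian := by
  ext i j
  simp only [adjMat, conjTranspose_apply, of_apply, star_trivial]
  rw [G.adj_comm]

lemma adjMat_nonneg (i j : V) : 0 ≤ adjMat G i j := by
  simp only [adjMat, of_apply]
  split_ifs <;> norm_num

variable {G}

lemma adjMat_apply_of_adj {a b : V} (hab : G.Adj a b) : adjMat G a b = 1 := by
  simp [adjMat, hab]

lemma adjMat_eq_deleteEdges_add [DecidableEq V] {u v : V} (huv : G.Adj u v) :
    adjMat G = adjMat (G.deleteEdges {s(u, v)}) + single u v 1 + single v u 1 := by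
  ext i j
  by_cases h : s(i, j) = s(u, v)
  · rcases Sym2.eq_iff.mp h with ⟨rfl, rfl⟩ | ⟨rfl, rfl⟩ <;>
      simp [adjMat, huv, huv.symm, huv.ne, huv.ne.symm]
  · have hu : ¬ (u = i ∧ v = j) := by rintro ⟨rfl, rfl⟩; exact h rfl
    have hv : ¬ (v = i ∧ u = j) := by rintro ⟨rfl, rfl⟩; exact h Sym2.eq_swap
    simp only [adjMat, Matrix.add_apply, single_apply, of_apply, hu, hv, if_false, add_zero]
    split_ifs <;> simp_all

lemma dotProduct_adjMat_mulVec_eq_deleteEdges_add {u v : V} (huv : G.Adj u v) (x : V → ℝ) :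
    x ⬝ᵥ adjMat G *ᵥ x = x ⬝ᵥ adjMat (G.deleteEdges {s(u, v)}) *ᵥ x + 2 * (x u * x v) := by
  classical
  rw [adjMat_eq_deleteEdges_add huv]
  simp [add_mulVec, dotProduct_add, single_mulVec_eq, dotProduct_single]
  ring

lemma IsMaxAdjEigenvalue.one_le_of_adj {μ : ℝ} (h : IsMaxAdjEigenvalue (adjMat G) μ) {a b : V}
    (hab : G.Adj a b) : 1 ≤ μ := by
  classical
  have := h.dotProduct_mulVec_le (adjMat_isHermitian G) (Pi.single a 1 + Pi.single b 1)
  simp [mulVec_add, dotProduct_add, add_dotProduct, adjMat, hab, hab.symm, hab.ne, hab.ne.symm]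
    at this
  linarith

lemma IsMaxAdjEigenvalue.two_mul_le_sub_mul_dotProduct {μG μH : ℝ}
    (hmaxG : IsMaxAdjEigenvalue (adjMat G) μG) {u v : V} (huv : G.Adj u v) {y : V → ℝ}
    (hy : adjMat (G.deleteEdges {s(u, v)}) *ᵥ y = μH • y) :
    2 * (y u * y v) ≤ (μG - μH) * (y ⬝ᵥ y) := by
  have := hmaxG.dotProduct_mulVec_le (adjMat_isHermitian G) y
  rw [dotProduct_adjMat_mulVec_eq_deleteEdges_add huv, hy, dotProduct_smul, smul_eq_mul] at this
  linarith

end adjMat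

section PerronVector

variable {G : SimpleGraph V} {y : V → ℝ} {μ : ℝ}

lemma le_adjMat_mulVec_of_adj (hy : 0 ≤ y) {a b : V} (hab : G.Adj a b) :
    y b ≤ (adjMat G *ᵥ y) a :=
  calc y b = adjMat G a b * y b := by rw [adjMat_apply_of_adj hab, one_mul]
    _ ≤ ∑ j, adjMat G a j * y j :=
      Finset.single_le_sum (fun j _ => mul_nonneg (adjMat_nonneg G a j) (hy j)) (Finset.mem_univ b)

lemma le_pow_length_mul_of_adjMat_mulVec_eq (hy : 0 ≤ y) (hμ : 0 ≤ μ)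
    (hyμ : adjMat G *ᵥ y = μ • y) {a b : V} (p : G.Walk a b) : y b ≤ μ ^ p.length * y a := by
  induction p with
  | nil => simp
  | @cons a c b hac p ih =>
    have hstep : y c ≤ μ * y a := by simpa [hyμ] using le_adjMat_mulVec_of_adj hy hac
    calc y b ≤ μ ^ p.length * y c := ih
      _ ≤ μ ^ p.length * (μ * y a) := by gcongr
      _ = μ ^ (p.cons hac).length * y a := by rw [SimpleGraph.Walk.length_cons, pow_succ]; ring

lemma sq_le_pow_mul_mul_of_adjMat_mulVec_eq (hG : G.Connected) (hy : 0 ≤ y) (hμ : 1 ≤ μ)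
    (hyμ : adjMat G *ᵥ y = μ • y) (w u v : V) {k : ℕ} (hk : G.dist w u + G.dist w v ≤ k) :
    y w ^ 2 ≤ μ ^ k * (y u * y v) := by
  obtain ⟨p, hp⟩ := (hG.preconnected u w).exists_walk_length_eq_dist
  obtain ⟨q, hq⟩ := (hG.preconnected v w).exists_walk_length_eq_dist
  have hpu := le_pow_length_mul_of_adjMat_mulVec_eq hy (by linarith) hyμ p
  have hqv := le_pow_length_mul_of_adjMat_mulVec_eq hy (by linarith) hyμ q
  rw [hp, SimpleGraph.dist_comm] at hpu
  rw [hq, SimpleGraph.dist_comm] at hqv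
  calc y w ^ 2 ≤ (μ ^ G.dist w u * y u) * (μ ^ G.dist w v * y v) := by
        rw [sq]; exact mul_le_mul hpu hqv (hy w) ((hy w).trans hpu)
    _ = μ ^ (G.dist w u + G.dist w v) * (y u * y v) := by ring
    _ ≤ μ ^ k * (y u * y v) :=
        mul_le_mul_of_nonneg_right (pow_le_pow_right₀ hμ hk) (mul_nonneg (hy u) (hy v))

end PerronVector

lemma two_div_lt_sub_of_two_mul_le {μG μH P S N : ℝ} {k : ℕ} (hk : k ≠ 0) (hμH : 0 ≤ μH)
    (hN : 0 < N) (hS : 0 < S) (hgap : 2 * P ≤ (μG - μH) * S) (hSP : S ≤ N * (μH ^ k * P)) :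
    2 / (μG ^ k * N) < μG - μH := by
  have hP : 0 < P :=
    pos_of_mul_pos_right (pos_of_mul_pos_right (hS.trans_le hSP) hN.le) (pow_nonneg hμH k)
  have hμ : μH < μG := by
    linarith [pos_of_mul_pos_left ((mul_pos two_pos hP).trans_le hgap) hS.le]
  rw [div_lt_iff₀ (mul_pos (pow_pos (by linarith) k) hN)]
  refine lt_of_mul_lt_mul_right ?_ hP.le
  calc 2 * P ≤ (μG - μH) * S := hgap
    _ ≤ (μG - μH) * (N * (μH ^ k * P)) := by gcongr
    _ < (μG - μH) * (N * (μG ^ k * P)) := by gcongr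
    _ = (μG - μH) * (μG ^ k * N) * P := by ring

theorem stmt6_general {n : ℕ} (G : SimpleGraph (Fin n))
    (D : ℕ) (hD1 : ∀ u v, G.dist u v ≤ D)
    (u v : Fin n) (huv : G.Adj u v)
    (hH : (G.deleteEdges {s(u, v)}).Connected)
    (μG μH : ℝ) (hmaxG : IsMaxAdjEigenvalue (adjMat G) μG)
    (hmaxH : IsMaxAdjEigenvalue (adjMat (G.deleteEdges {s(u, v)})) μH) :
    μG - μH > 2 / (μG ^ (2 * D) * n) := by
  set H := G.deleteEdges {s(u, v)}
  obtain ⟨y, hy, hy0, hyμ⟩ :=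
    hmaxH.exists_nonneg_eigenvector (adjMat_isHermitian H) (adjMat_nonneg H)
  have : Nontrivial (Fin n) := ⟨⟨u, v, huv.ne⟩⟩
  obtain ⟨b, hub⟩ := hH.preconnected.exists_adj_of_nontrivial u
  have hμH : 1 ≤ μH := hmaxH.one_le_of_adj hub
  obtain ⟨w, hw⟩ := Finite.exists_max y
  have hS : y ⬝ᵥ y ≤ n * (μH ^ (2 * D) * (y u * y v)) :=
    calc y ⬝ᵥ y ≤ n * y w ^ 2 := by simpa using dotProduct_self_le_card_mul_sq hy0 hw
      _ ≤ n * (μH ^ (2 * D) * (y u * y v)) := by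
        gcongr
        exact sq_le_pow_mul_mul_of_adjMat_mulVec_eq hH hy0 hμH hyμ w u v
          (hH.dist_add_dist_deleteEdges_le hD1 w)
  have hD : 1 ≤ D := (SimpleGraph.dist_eq_one_iff_adj.mpr huv).symm.le.trans (hD1 u v)
  exact two_div_lt_sub_of_two_mul_le (by omega) (by linarith) (Nat.cast_pos.mpr (Fin.pos u))
    ((dotProduct_nonneg_of_nonneg hy0 hy0).lt_of_ne' (dotProduct_self_eq_zero.not.mpr hy))
    (hmaxG.two_mul_le_sub_mul_dotProduct huv hyμ) hS

theorem stmt6 {n : ℕ} (G : SimpleGraph (Fin n)) (hG : G.Connected)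
    (D : ℕ) (hD1 : ∀ u v, G.dist u v ≤ D) (hD2 : ∃ u v, G.dist u v = D)
    (u v : Fin n) (huv : G.Adj u v)
    (hH : (G.deleteEdges {s(u, v)}).Connected)
    (μG μH : ℝ) (hmaxG : IsMaxAdjEigenvalue (adjMat G) μG)
    (hmaxH : IsMaxAdjEigenvalue (adjMat (G.deleteEdges {s(u, v)})) μH) :
    μG - μH > 2 / (μG ^ (2 * D) * n) :=
  stmt6_general G D hD1 u v huv hH μG μH hmaxG hmaxH
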